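/- arXiv:math/0611034 — 2 statements merged into one kernel-verified Lean document; each statement's English description precedes it below -/
import Mathlib

section
/- Let G be an infinite-dimensional real separable Hilbert space with complete orthonormal system (τ_j)_{j≥0}, I a compact interval, and f : I → G continuous. Write f_j(t) = ⟨f(t), τ_j⟩. If for each j there is a real polynomial p_j with ‖f_j − p_j‖_{L^∞(I)} < ε/(j+1), then for all sufficiently large n the G-valued polynomial q_n(t) = Σ_{j=0}^{n} p_j(t) τ_j satisfies sup_{t∈I} ‖f(t) − q_n(t)‖_G ≤ ε(1 + (Σ_{j=0}^∞ 1/(j+1)²)^{1/2}). -/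
/-!
The partial-sum maps `x ↦ Σ_{j<n} ⟪x, τ_j⟫ τ_j` are 1-Lipschitz (Bessel) and converge pointwise
to the identity, so by equicontinuity they converge uniformly on the compact set `f(I)`; this
makes `f - Σ_{j≤n} f_j τ_j` uniformly smaller than `ε` for large `n`. The remaining error
`Σ_{j≤n} (f_j - p_j) τ_j` has orthogonal summands, so by Pythagoras its norm is at most
`(Σ_j ε²/(j+1)²)^{1/2}`.
-/

open Finset RealInnerProductSpace Filter Topology

theorem EquicontinuousOn.tendstoUniformlyOn_of_tendsto {ι X α : Type*} [TopologicalSpace X]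
    [UniformSpace α] {F : ι → X → α} {f : X → α} {K : Set X} {l : Filter ι}
    (hK : IsCompact K) (hF : EquicontinuousOn F K)
    (h : ∀ x ∈ K, Tendsto (F · x) l (𝓝 (f x))) : TendstoUniformlyOn F f l K := by
  have : CompactSpace K := isCompact_iff_compactSpace.mp hK
  rw [tendstoUniformlyOn_iff_tendstoUniformly_comp_coe]
  exact UniformFun.tendsto_iff_tendstoUniformly.1 <|
    ((equicontinuous_restrict_iff _).mpr hF).tendsto_uniformFun_iff_pi l _ |>.2
      (tendsto_pi_nhds.2 fun x => h x x.2)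

section Orthonormal

variable {ι G : Type*} [NormedAddCommGroup G] [InnerProductSpace ℝ G] {v : ι → G}

theorem Orthonormal.norm_sum_smul_sq (hv : Orthonormal ℝ v) (c : ι → ℝ) (s : Finset ι) :
    ‖∑ i ∈ s, c i • v i‖ ^ 2 = ∑ i ∈ s, c i ^ 2 := by
  simpa [Real.norm_eq_abs, sq_abs] using hv.orthogonalFamily.norm_sum c s

theorem Orthonormal.norm_sum_smul_le_sqrt (hv : Orthonormal ℝ v) {c d : ι → ℝ} {s : Finset ι}
    (h : ∀ i ∈ s, |c i| ≤ d i) : ‖∑ i ∈ s, c i • v i‖ ≤ √(∑ i ∈ s, d i ^ 2) := by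
  rw [← Real.sqrt_sq (norm_nonneg _), hv.norm_sum_smul_sq]
  exact Real.sqrt_le_sqrt <| sum_le_sum fun i hi =>
    sq_le_sq' (abs_le.1 (h i hi)).1 (abs_le.1 (h i hi)).2

theorem Orthonormal.norm_sum_inner_smul_le (hv : Orthonormal ℝ v) (x : G) (s : Finset ι) :
    ‖∑ i ∈ s, ⟪x, v i⟫ • v i‖ ≤ ‖x‖ := by
  refine (sq_le_sq₀ (norm_nonneg _) (norm_nonneg _)).1 ?_
  rw [hv.norm_sum_smul_sq]
  simpa [Real.norm_eq_abs, sq_abs, real_inner_comm] using hv.sum_inner_products_le x (s := s)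

end Orthonormal

namespace HilbertBasis

variable {ι G : Type*} [NormedAddCommGroup G] [InnerProductSpace ℝ G] (τ : HilbertBasis ι ℝ G)

noncomputable def partialSum (s : Finset ι) (x : G) : G := ∑ i ∈ s, ⟪x, τ i⟫ • τ i

theorem dist_partialSum_le (s : Finset ι) (x y : G) :
    dist (τ.partialSum s x) (τ.partialSum s y) ≤ dist x y := by
  have : τ.partialSum s x - τ.partialSum s y = τ.partialSum s (x - y) := by
    simp only [partialSum, inner_sub_left, sub_smul, sum_sub_distrib]
  rw [dist_eq_norm, dist_eq_norm, this]
  exact τ.orthonormal.norm_sum_inner_smul_le _ _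

theorem tendsto_partialSum (x : G) : Tendsto (τ.partialSum · x) atTop (𝓝 x) :=
  show HasSum (fun i => ⟪x, τ i⟫ • τ i) x by
    simpa [τ.repr_apply_apply, real_inner_comm] using τ.hasSum_repr x

theorem tendstoUniformlyOn_partialSum {K : Set G} (hK : IsCompact K) :
    TendstoUniformlyOn τ.partialSum id atTop K :=
  (Metric.equicontinuous_of_continuity_modulus id tendsto_id _ fun x y s =>
    τ.dist_partialSum_le s x y).equicontinuousOn K
      |>.tendstoUniformlyOn_of_tendsto hK fun x _ => τ.tendsto_partialSum x

end HilbertBasis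

theorem sum_range_one_div_succ_sq_le_tsum (n : ℕ) :
    ∑ j ∈ range n, 1 / ((j : ℝ) + 1) ^ 2 ≤ ∑' j : ℕ, 1 / ((j : ℝ) + 1) ^ 2 := by
  refine Summable.sum_le_tsum _ (fun j _ => by positivity) ?_
  exact_mod_cast (summable_nat_add_iff 1).mpr (Real.summable_one_div_nat_pow.mpr one_lt_two)

theorem Orthonormal.norm_sum_range_smul_le {G : Type*} [NormedAddCommGroup G]
    [InnerProductSpace ℝ G] {v : ℕ → G} (hv : Orthonormal ℝ v) {c : ℕ → ℝ} {ε : ℝ} (hε : 0 ≤ ε)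
    (hc : ∀ j, |c j| ≤ ε / (j + 1)) (n : ℕ) :
    ‖∑ j ∈ range n, c j • v j‖ ≤ ε * √(∑' j : ℕ, 1 / ((j : ℝ) + 1) ^ 2) :=
  calc ‖∑ j ∈ range n, c j • v j‖ ≤ √(∑ j ∈ range n, (ε / (j + 1)) ^ 2) :=
        hv.norm_sum_smul_le_sqrt fun j _ => hc j
    _ = √(ε ^ 2 * ∑ j ∈ range n, 1 / ((j : ℝ) + 1) ^ 2) := by
        simp only [mul_sum, div_pow, mul_one_div]
    _ = ε * √(∑ j ∈ range n, 1 / ((j : ℝ) + 1) ^ 2) := by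
        rw [Real.sqrt_mul (sq_nonneg ε), Real.sqrt_sq hε]
    _ ≤ ε * √(∑' j : ℕ, 1 / ((j : ℝ) + 1) ^ 2) := by
        gcongr; exact sum_range_one_div_succ_sq_le_tsum n

theorem approx_infinite_dim_general (G : Type*) [NormedAddCommGroup G] [InnerProductSpace ℝ G]
    (τ : HilbertBasis ℕ ℝ G)
    (a b : ℝ) (f : ℝ → G) (hf : ContinuousOn f (Set.Icc a b))
    (ε : ℝ) (hε : 0 < ε) (p : ℕ → Polynomial ℝ)
    (hp : ∀ j : ℕ, ∀ t ∈ Set.Icc a b, |⟪f t, τ j⟫ - (p j).eval t| < ε / (j + 1)) :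
    ∃ m₀ : ℕ, ∀ n ≥ m₀, ∀ t ∈ Set.Icc a b,
      ‖f t - ∑ j ∈ Finset.range (n + 1), (p j).eval t • τ j‖
        ≤ ε * (1 + Real.sqrt (∑' j : ℕ, 1 / ((j : ℝ) + 1) ^ 2)) := by
  have hK : IsCompact (f '' Set.Icc a b) := isCompact_Icc.image_of_continuousOn hf
  have htail : ∀ᶠ n in atTop, ∀ t ∈ Set.Icc a b,
      ‖f t - τ.partialSum (range (n + 1)) (f t)‖ < ε :=
    (tendsto_finset_range.comp (tendsto_add_atTop_nat 1)).eventually <|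
      (Metric.tendstoUniformlyOn_iff.1 (τ.tendstoUniformlyOn_partialSum hK) ε hε).mono
        fun s hs t ht => dist_eq_norm (f t) _ ▸ hs (f t) ⟨t, ht, rfl⟩
  obtain ⟨m₀, hm₀⟩ := eventually_atTop.1 htail
  refine ⟨m₀, fun n hn t ht => ?_⟩
  have hdiff : τ.partialSum (range (n + 1)) (f t) - ∑ j ∈ range (n + 1), (p j).eval t • τ j
      = ∑ j ∈ range (n + 1), (⟪f t, τ j⟫ - (p j).eval t) • τ j := by
    simp only [HilbertBasis.partialSum, sub_smul, sum_sub_distrib]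
  calc _ ≤ _ := norm_sub_le_norm_sub_add_norm_sub _ (τ.partialSum (range (n + 1)) (f t)) _
    _ ≤ ε + ε * √(∑' j : ℕ, 1 / ((j : ℝ) + 1) ^ 2) := by
        rw [hdiff]
        exact add_le_add (hm₀ n hn t ht).le
          (τ.orthonormal.norm_sum_range_smul_le hε.le (fun j => (hp j t ht).le) _)
    _ = _ := by ring

/-- If the coordinates `f_j = ⟪f(·), τ_j⟫` of a continuous `G`-valued function are
uniformly approximated by real polynomials `p_j` with error `< ε/(j+1)`, then the
partial sums `q_n(t) = Σ_{j≤n} p_j(t) τ_j` approximate `f` uniformly on `I` with error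
at most `ε(1 + (Σ_j 1/(j+1)²)^{1/2})` for all sufficiently large `n`. -/
theorem approx_infinite_dim (G : Type*) [NormedAddCommGroup G] [InnerProductSpace ℝ G]
    [CompleteSpace G] (τ : HilbertBasis ℕ ℝ G)
    (a b : ℝ) (hab : a ≤ b) (f : ℝ → G) (hf : ContinuousOn f (Set.Icc a b))
    (ε : ℝ) (hε : 0 < ε) (p : ℕ → Polynomial ℝ)
    (hp : ∀ j : ℕ, ∀ t ∈ Set.Icc a b, |⟪f t, τ j⟫ - (p j).eval t| < ε / (j + 1)) :
    ∃ m₀ : ℕ, ∀ n ≥ m₀, ∀ t ∈ Set.Icc a b,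
      ‖f t - ∑ j ∈ Finset.range (n + 1), (p j).eval t • τ j‖
        ≤ ε * (1 + Real.sqrt (∑' j : ℕ, 1 / ((j : ℝ) + 1) ^ 2)) :=
  approx_infinite_dim_general G τ a b f hf ε hε p hp
end

section
/- Let w : ℝ → [0,∞] be a measurable weight and let a ∈ supp w satisfy esslim_{x→a⁺} w(x) = 0 (a type-1 right singularity). Then every f ∈ L^∞(supp w, w) which is a uniform-in-weighted-norm limit of continuous functions g_n ∈ C(ℝ) ∩ L^∞(w) satisfies esslimsup_{x→a⁺} |f(x) − f(a)| w(x) = 0. -/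
open MeasureTheory ENNReal Filter Topology

/-!
Fix `ε > 0` and a continuous `g` with `‖(f - g) w‖_∞ ≤ ε` on `supp w`. Near `a`, split
`|f x - f a| w x ≤ |f x - g x| w x + |g x - f a| w x`. The first term is at most `ε` almost
everywhere (off `supp w` it vanishes), and the second tends to `0` along `x → a⁺` because
`g x - f a` stays bounded while `w x → 0` essentially. Hence the essential limsup is at most `ε`.
-/

section

variable {α : Type*} [TopologicalSpace α] [MeasurableSpace α] [OpensMeasurableSpace α]
  {μ : Measure α} {w : α → ℝ}

theorem ae_ofReal_mul_le_of_essSup_restrict_tsupport_le {h : α → ℝ} {c : ℝ≥0∞}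
    (hc : essSup (fun x => ENNReal.ofReal (h x * w x)) (μ.restrict (tsupport w)) ≤ c) :
    ∀ᵐ x ∂μ, ENNReal.ofReal (h x * w x) ≤ c := by
  have hle : ∀ᵐ x ∂μ.restrict (tsupport w), ENNReal.ofReal (h x * w x) ≤ c :=
    (ENNReal.ae_le_essSup _).mono fun x hx => hx.trans hc
  rw [ae_restrict_iff' (isClosed_tsupport w).measurableSet] at hle
  filter_upwards [hle] with x hx
  by_cases hxw : x ∈ tsupport w
  · exact hx hxw
  · simp [image_eq_zero_of_notMem_tsupport hxw]

theorem limsup_ofReal_abs_sub_mul_le_essSup {f g : α → ℝ} {s : Set α} {a : α}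
    (hw0 : ∀ x, 0 ≤ w x) (hw : Tendsto w (𝓝[s] a ⊓ ae μ) (𝓝 0))
    (hg : ContinuousWithinAt g s a) :
    limsup (fun x => ENNReal.ofReal (|f x - f a| * w x)) (𝓝[s] a ⊓ ae μ) ≤
      essSup (fun x => ENNReal.ofReal (|f x - g x| * w x)) (μ.restrict (tsupport w)) := by
  set E := essSup (fun x => ENNReal.ofReal (|f x - g x| * w x)) (μ.restrict (tsupport w))
  have hfg : ∀ᶠ x in 𝓝[s] a ⊓ ae μ, ENNReal.ofReal (|f x - g x| * w x) ≤ E :=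
    (ae_ofReal_mul_le_of_essSup_restrict_tsupport_le le_rfl).filter_mono inf_le_right
  have hgw : Tendsto (fun x => |g x - f a| * w x) (𝓝[s] a ⊓ ae μ) (𝓝 0) := by
    simpa using ((hg.tendsto.mono_left inf_le_left).sub_const (f a)).abs.mul hw
  refine ENNReal.le_of_forall_pos_le_add fun δ hδ _ => limsup_le_of_le (by isBoundedDefault) ?_
  filter_upwards [hfg, hgw.eventually (ge_mem_nhds (NNReal.coe_pos.mpr hδ))] with x hfgx hgwx
  calc ENNReal.ofReal (|f x - f a| * w x)
      ≤ ENNReal.ofReal (|f x - g x| * w x) + ENNReal.ofReal (|g x - f a| * w x) := by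
        refine (ENNReal.ofReal_le_ofReal ?_).trans ENNReal.ofReal_add_le
        rw [← add_mul]
        exact mul_le_mul_of_nonneg_right (abs_sub_le _ _ _) (hw0 x)
    _ ≤ E + δ := by
        gcongr
        simpa using ENNReal.ofReal_le_ofReal hgwx

end

theorem esslimsup_zero_at_type1_singularity_general (w : ℝ → ℝ)
    (hw0 : ∀ x, 0 ≤ w x) (f : ℝ → ℝ)
    (a : ℝ)
    (hsing : Filter.Tendsto w (nhdsWithin a (Set.Ioi a) ⊓ MeasureTheory.ae (volume : Measure ℝ)) (nhds 0))
    (hf : ∀ ε : ℝ, 0 < ε → ∃ g : ℝ → ℝ, Continuous g ∧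
      essSup (fun x => ENNReal.ofReal (|g x| * w x)) (volume.restrict (tsupport w)) < ⊤ ∧
      essSup (fun x => ENNReal.ofReal (|f x - g x| * w x))
        (volume.restrict (tsupport w)) ≤ ENNReal.ofReal ε) :
    Filter.limsup (fun x => ENNReal.ofReal (|f x - f a| * w x))
      (nhdsWithin a (Set.Ioi a) ⊓ MeasureTheory.ae (volume : Measure ℝ)) = 0 := by
  refine le_antisymm (ENNReal.le_of_forall_pos_le_add fun ε hε _ => ?_) zero_le
  obtain ⟨g, hg, -, hfg⟩ := hf ε hε
  calc _ ≤ essSup (fun x => ENNReal.ofReal (|f x - g x| * w x)) (volume.restrict (tsupport w)) :=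
        limsup_ofReal_abs_sub_mul_le_essSup hw0 hsing hg.continuousWithinAt
    _ ≤ 0 + ε := by simpa using hfg

/-- Necessity of the singularity condition: if `a ∈ supp w` is a right singularity of
type 1 (the essential limit of `w` as `x → a⁺` is `0`) and `f ∈ L^∞(supp w, w)` is a
limit in the weighted norm of continuous functions, then the essential limsup of
`|f(x) − f(a)| w(x)` as `x → a⁺` is `0`. -/
theorem esslimsup_zero_at_type1_singularity (w : ℝ → ℝ) (hwmeas : Measurable w)
    (hw0 : ∀ x, 0 ≤ w x) (f : ℝ → ℝ) (hfmeas : Measurable f)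
    (a : ℝ) (ha : a ∈ tsupport w)
    (hsing : Filter.Tendsto w (nhdsWithin a (Set.Ioi a) ⊓ MeasureTheory.ae (volume : Measure ℝ)) (nhds 0))
    (hfL : essSup (fun x => ENNReal.ofReal (|f x| * w x)) (volume.restrict (tsupport w)) < ⊤)
    (hf : ∀ ε : ℝ, 0 < ε → ∃ g : ℝ → ℝ, Continuous g ∧
      essSup (fun x => ENNReal.ofReal (|g x| * w x)) (volume.restrict (tsupport w)) < ⊤ ∧
      essSup (fun x => ENNReal.ofReal (|f x - g x| * w x))
        (volume.restrict (tsupport w)) ≤ ENNReal.ofReal ε) :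
    Filter.limsup (fun x => ENNReal.ofReal (|f x - f a| * w x))
      (nhdsWithin a (Set.Ioi a) ⊓ MeasureTheory.ae (volume : Measure ℝ)) = 0 :=
  esslimsup_zero_at_type1_singularity_general w hw0 f a hsing hf
end
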